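/- For complex a, b, c, d with Re(c) > 0, Re(d) > 0 and Re(c + d − a − b) > 0, one has ∫₀¹ t^{c−1} (1−t)^{d−1} ₂F₁(a,b;c;t) dt = Γ(c)Γ(d)Γ(c+d−a−b) / (Γ(c+d−a)Γ(c+d−b)). -/

import Mathlib

/-!
Expanding `₂F₁(a, b; c; t)` and integrating termwise against `t^(c-1) (1-t)^(d-1)` turns the
`k`-th coefficient into a multiple of `B(c + k, d) = B(c, d) (c)ₖ / (c + d)ₖ`, so the integral is
`B(c, d) ₂F₁(a, b; c + d; 1)`; the same computation at the real parameters `Re c`, `Re d` justifies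
the interchange. It remains to prove Gauss's summation
`₂F₁(a, b; s; 1) = Γ(s) Γ(s - a - b) / (Γ(s - a) Γ(s - b))`. Up to a telescoping series the
coefficients satisfy the contiguous relation `s (s - a - b) F(s) = (s - a) (s - b) F(s + 1)`, and
iterating it writes `F(s)` as a ratio of Pochhammer products times `F(s + n)`. By Gauss's product
formula for `Γ` the ratio tends to the Gamma quotient, while `F(s + n) → 1` by dominated
convergence. The product formula also gives `|(a)ₖ (b)ₖ / ((s)ₖ k!)| ≍ k ^ (Re (a + b - s) - 1)`,
which is what makes the series converge at `1` and the telescoping remainder vanish.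
-/

open Complex MeasureTheory

/-- The Gauss hypergeometric function `₂F₁(a, b; c; z)`, defined by its power series. -/
noncomputable def hyp2F1 (a b c z : ℂ) : ℂ :=
  ∑' k : ℕ, ((ascPochhammer ℂ k).eval a * (ascPochhammer ℂ k).eval b /
    ((ascPochhammer ℂ k).eval c * (k.factorial : ℂ))) * z ^ k

open Filter Topology Finset
open scoped Nat

theorem ascPochhammer_eval_eq_prod_range {R : Type*} [CommSemiring R] (n : ℕ) (r : R) :
    (ascPochhammer R n).eval r = ∏ j ∈ range n, (r + j) := by
  induction n with
  | zero => simp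
  | succ n ih => rw [ascPochhammer_succ_eval, ih, prod_range_succ]

theorem ascPochhammer_succ_eval_left {R : Type*} [CommSemiring R] (n : ℕ) (r : R) :
    (ascPochhammer R (n + 1)).eval r = r * (ascPochhammer R n).eval (r + 1) := by
  simp [ascPochhammer_succ_left, add_comm]

namespace Complex

theorem ne_neg_natCast_of_re_pos {z : ℂ} (hz : 0 < z.re) (k : ℕ) : z ≠ -k := by
  rintro rfl
  simp only [neg_re, natCast_re, Left.neg_pos_iff] at hz
  linarith [(k.cast_nonneg : (0 : ℝ) ≤ k)]

theorem add_natCast_ne_neg_natCast {z : ℂ} (hz : ∀ k : ℕ, z ≠ -k) (n k : ℕ) : z + n ≠ -k :=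
  fun h => hz (k + n) (by push_cast; linear_combination h)

theorem ascPochhammer_eval_ne_zero {z : ℂ} (hz : ∀ k : ℕ, z ≠ -k) (n : ℕ) :
    (ascPochhammer ℂ n).eval z ≠ 0 := by
  rw [Ne, ascPochhammer_eval_eq_zero_iff]
  rintro ⟨k, -, hk⟩
  exact hz k (by rw [hk, neg_neg])

theorem norm_ascPochhammer_eval_ofReal_le {x : ℝ} {z : ℂ} (hx : 0 ≤ x) (hxz : x ≤ z.re)
    (n : ℕ) : ‖(ascPochhammer ℂ n).eval (x : ℂ)‖ ≤ ‖(ascPochhammer ℂ n).eval z‖ := by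
  simp only [ascPochhammer_eval_eq_prod_range, norm_prod]
  refine prod_le_prod (fun _ _ => norm_nonneg _) fun j _ => ?_
  calc ‖(x : ℂ) + j‖ = x + j := by
        rw [← ofReal_natCast, ← ofReal_add, norm_real, Real.norm_of_nonneg (by positivity)]
    _ ≤ (z + j).re := by simp [hxz]
    _ ≤ ‖z + j‖ := re_le_norm _

theorem Gamma_add_nat_eq {z : ℂ} (hz : ∀ k : ℕ, z ≠ -k) (n : ℕ) :
    Gamma (z + n) = (ascPochhammer ℂ n).eval z * Gamma z := by
  rw [← Gamma_add_nat_div_Gamma_eq z hz, div_mul_cancel₀ _ (Gamma_ne_zero hz)]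

theorem betaIntegral_add_nat {u v : ℂ} (hu : 0 < u.re) (hv : 0 < v.re) (n : ℕ) :
    betaIntegral (u + n) v =
      (ascPochhammer ℂ n).eval u / (ascPochhammer ℂ n).eval (u + v) * betaIntegral u v := by
  have huv : 0 < (u + v).re := by simp only [add_re]; positivity
  have hun : 0 < (u + n).re := by simp only [add_re, natCast_re]; positivity
  rw [betaIntegral_eq_Gamma_mul_div _ _ hun hv, betaIntegral_eq_Gamma_mul_div _ _ hu hv,
    add_right_comm, Gamma_add_nat_eq (ne_neg_natCast_of_re_pos hu),
    Gamma_add_nat_eq (ne_neg_natCast_of_re_pos huv)]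
  have := ascPochhammer_eval_ne_zero (ne_neg_natCast_of_re_pos huv) n
  have := Gamma_ne_zero_of_re_pos huv
  field_simp

theorem GammaSeq_eq_div_ascPochhammer (s : ℂ) (n : ℕ) :
    GammaSeq s n = (n : ℂ) ^ s * n ! / (ascPochhammer ℂ (n + 1)).eval s := by
  rw [GammaSeq, ascPochhammer_eval_eq_prod_range]

theorem norm_GammaSeq {n : ℕ} (hn : n ≠ 0) (s : ℂ) :
    ‖GammaSeq s n‖ = (n : ℝ) ^ s.re * n ! / ‖(ascPochhammer ℂ (n + 1)).eval s‖ := by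
  rw [GammaSeq_eq_div_ascPochhammer, norm_div, norm_mul,
    norm_natCast_cpow_of_pos (Nat.pos_of_ne_zero hn), norm_natCast]

theorem GammaSeq_neg_nat_eq_zero {k n : ℕ} (hkn : k ≤ n) : GammaSeq (-k) n = 0 := by
  rw [GammaSeq, prod_eq_zero (mem_range.2 (Nat.lt_succ_of_le hkn)) (neg_add_cancel _), div_zero]

-- At a pole of `Γ` (where Mathlib's `Γ` is `0`) the `GammaSeq` terms vanish eventually, so
-- both sides are `0` by the convention `x / 0 = 0`.
theorem tendsto_norm_GammaSeq_div (s a b : ℂ) :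
    Tendsto (fun n => ‖GammaSeq s n‖ / (‖GammaSeq a n‖ * ‖GammaSeq b n‖)) atTop
      (𝓝 (‖Gamma s‖ / (‖Gamma a‖ * ‖Gamma b‖))) := by
  by_cases hab : Gamma a ≠ 0 ∧ Gamma b ≠ 0
  · exact (GammaSeq_tendsto_Gamma s).norm.div
      ((GammaSeq_tendsto_Gamma a).norm.mul (GammaSeq_tendsto_Gamma b).norm)
      (by simpa using hab)
  · have hpole : ∃ k : ℕ, a = -k ∨ b = -k := by
      simp only [Ne, Gamma_eq_zero_iff, not_and_or, not_not] at hab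
      rcases hab with ⟨k, hk⟩ | ⟨k, hk⟩
      exacts [⟨k, .inl hk⟩, ⟨k, .inr hk⟩]
    obtain ⟨k, hk⟩ := hpole
    have hzero : Gamma a * Gamma b = 0 := by
      rcases hk with rfl | rfl <;> simp [Gamma_neg_nat_eq_zero]
    rw [← norm_mul, hzero, norm_zero, div_zero]
    refine tendsto_const_nhds.congr' ?_
    filter_upwards [eventually_ge_atTop k] with n hn
    rcases hk with rfl | rfl <;> simp [GammaSeq_neg_nat_eq_zero hn]

end Complex

noncomputable def hyp2F1Coeff (a b c : ℂ) (k : ℕ) : ℂ :=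
  (ascPochhammer ℂ k).eval a * (ascPochhammer ℂ k).eval b /
    ((ascPochhammer ℂ k).eval c * (k ! : ℂ))

theorem hyp2F1_eq_tsum (a b c z : ℂ) : hyp2F1 a b c z = ∑' k, hyp2F1Coeff a b c k * z ^ k :=
  rfl

theorem hyp2F1_one (a b c : ℂ) : hyp2F1 a b c 1 = ∑' k, hyp2F1Coeff a b c k := by
  simp [hyp2F1_eq_tsum]

theorem hyp2F1Coeff_zero (a b c : ℂ) : hyp2F1Coeff a b c 0 = 1 := by
  simp [hyp2F1Coeff]

theorem norm_hyp2F1Coeff_le (a b : ℂ) {c : ℂ} {σ : ℝ} (hσ : 0 < σ) (hσc : σ ≤ c.re)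
    (k : ℕ) :
    ‖hyp2F1Coeff a b c k‖ ≤ ‖hyp2F1Coeff a b σ k‖ := by
  have hσk :=
    ascPochhammer_eval_ne_zero (ne_neg_natCast_of_re_pos (z := σ) (by simpa using hσ)) k
  simp only [hyp2F1Coeff, norm_div, norm_mul, norm_natCast]
  have := norm_pos_iff.2 hσk
  gcongr
  exact norm_ascPochhammer_eval_ofReal_le hσ.le hσc k

theorem norm_hyp2F1Coeff_succ (a b c : ℂ) {m : ℕ} (hm : m ≠ 0) :
    ((m : ℝ) + 1) * ‖hyp2F1Coeff a b c (m + 1)‖ = (m : ℝ) ^ (a + b - c).re *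
      (‖GammaSeq c m‖ / (‖GammaSeq a m‖ * ‖GammaSeq b m‖)) := by
  have hm' : (0 : ℝ) < m := by positivity
  simp only [norm_GammaSeq hm, hyp2F1Coeff, norm_div, norm_mul, norm_natCast,
    Nat.factorial_succ, Nat.cast_mul, add_re, sub_re, Real.rpow_sub hm', Real.rpow_add hm']
  push_cast
  field_simp

theorem isBigO_hyp2F1Coeff (a b c : ℂ) :
    (fun m : ℕ => ((m : ℝ) + 1) * ‖hyp2F1Coeff a b c (m + 1)‖) =O[atTop]
      fun m : ℕ => (m : ℝ) ^ (a + b - c).re := by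
  have hR := (tendsto_norm_GammaSeq_div c a b).isBigO_one ℝ
  refine ((Asymptotics.isBigO_refl (fun m : ℕ => (m : ℝ) ^ (a + b - c).re) atTop).mul hR).congr'
    ?_ (by simp)
  filter_upwards [eventually_ne_atTop 0] with m hm
  exact (norm_hyp2F1Coeff_succ a b c hm).symm

theorem summable_norm_hyp2F1Coeff {a b c : ℂ} (habc : 0 < (c - a - b).re) :
    Summable fun k => ‖hyp2F1Coeff a b c k‖ := by
  rw [← summable_nat_add_iff 1]
  have hinv : (fun m : ℕ => ((m : ℝ) + 1)⁻¹) =O[atTop] fun m : ℕ => (m : ℝ) ^ (-1 : ℝ) := by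
    refine Asymptotics.IsBigO.of_bound 1 ?_
    filter_upwards [eventually_ne_atTop 0] with m hm
    have : (0 : ℝ) < m := by positivity
    rw [Real.rpow_neg_one, one_mul, Real.norm_of_nonneg (by positivity),
      Real.norm_of_nonneg (by positivity)]
    gcongr
    linarith
  refine summable_of_isBigO_nat' ((Real.summable_nat_rpow (p := (a + b - c).re + -1)).2 ?_)
    (((isBigO_hyp2F1Coeff a b c).mul hinv).congr' ?_ ?_)
  · simp only [sub_re, add_re] at habc ⊢
    linarith
  · filter_upwards with m
    field_simp
  · filter_upwards [eventually_ne_atTop 0] with m hm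
    rw [Real.rpow_add (by positivity)]

theorem tendsto_natCast_mul_hyp2F1Coeff {a b c : ℂ} (habc : 0 < (c - a - b).re) :
    Tendsto (fun k : ℕ => (k : ℂ) * hyp2F1Coeff a b c k) atTop (𝓝 0) := by
  rw [← tendsto_add_atTop_iff_nat 1, tendsto_zero_iff_norm_tendsto_zero]
  have hpow : Tendsto (fun m : ℕ => (m : ℝ) ^ (a + b - c).re) atTop (𝓝 0) := by
    rw [show a + b - c = -(c - a - b) by ring, neg_re]
    exact (tendsto_rpow_neg_atTop habc).comp tendsto_natCast_atTop_atTop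
  refine ((isBigO_hyp2F1Coeff a b c).trans_tendsto hpow).congr fun m => ?_
  rw [norm_mul, ← Nat.cast_succ, norm_natCast, Nat.cast_succ]

theorem tsum_sub_succ_of_tendsto {G : Type*} [AddCommGroup G] [TopologicalSpace G]
    [IsTopologicalAddGroup G] [T2Space G] {u : ℕ → G} {l : G}
    (hs : Summable fun k => u k - u (k + 1)) (hu : Tendsto u atTop (𝓝 l)) :
    ∑' k, (u k - u (k + 1)) = u 0 - l := by
  refine tendsto_nhds_unique hs.hasSum.tendsto_sum_nat ?_
  simp_rw [sum_range_sub']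
  exact tendsto_const_nhds.sub hu

theorem hyp2F1Coeff_contiguous (a b : ℂ) {c : ℂ} (hc : ∀ k : ℕ, c ≠ -k) (k : ℕ) :
    c * (c - a - b) * hyp2F1Coeff a b c k - (c - a) * (c - b) * hyp2F1Coeff a b (c + 1) k =
      c * (k * hyp2F1Coeff a b c k) - c * ((k + 1 : ℕ) * hyp2F1Coeff a b c (k + 1)) := by
  have hc0 : c ≠ 0 := by simpa using hc 0
  have hck : c + k ≠ 0 := fun h => hc k (by linear_combination h)
  have hP := ascPochhammer_eval_ne_zero hc k
  have hP1 : (ascPochhammer ℂ k).eval (c + 1) =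
      (ascPochhammer ℂ k).eval c * (c + k) / c := by
    rw [eq_div_iff hc0, mul_comm, ← ascPochhammer_succ_eval_left, ascPochhammer_succ_eval]
  simp only [hyp2F1Coeff, hP1, ascPochhammer_succ_eval, Nat.factorial_succ]
  push_cast
  field_simp
  ring

theorem hyp2F1_one_contiguous {a b c : ℂ} (hc : ∀ k : ℕ, c ≠ -k)
    (habc : 0 < (c - a - b).re) :
    c * (c - a - b) * hyp2F1 a b c 1 = (c - a) * (c - b) * hyp2F1 a b (c + 1) 1 := by
  have hs := (summable_norm_hyp2F1Coeff habc).of_norm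
  have hs1 := (summable_norm_hyp2F1Coeff (a := a) (b := b) (c := c + 1)
    (by simp only [sub_re, add_re, one_re] at habc ⊢; linarith)).of_norm
  have hu := (tendsto_natCast_mul_hyp2F1Coeff habc).const_mul c
  rw [mul_zero] at hu
  rw [← sub_eq_zero, hyp2F1_one, hyp2F1_one, ← tsum_mul_left, ← tsum_mul_left,
    ← (hs.mul_left _).tsum_sub (hs1.mul_left _)]
  simp_rw [hyp2F1Coeff_contiguous a b hc]
  rw [tsum_sub_succ_of_tendsto (u := fun k : ℕ => c * (k * hyp2F1Coeff a b c k)) ?_ hu]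
  · simp
  · exact ((hs.mul_left _).sub (hs1.mul_left _)).congr (hyp2F1Coeff_contiguous a b hc)

theorem ascPochhammer_mul_hyp2F1_one {a b c : ℂ} (hc : ∀ k : ℕ, c ≠ -k)
    (habc : 0 < (c - a - b).re) (n : ℕ) :
    (ascPochhammer ℂ n).eval c * (ascPochhammer ℂ n).eval (c - a - b) * hyp2F1 a b c 1 =
      (ascPochhammer ℂ n).eval (c - a) * (ascPochhammer ℂ n).eval (c - b) *
        hyp2F1 a b (c + n) 1 := by
  induction n with
  | zero => simp
  | succ n ih =>
    have hcn := hyp2F1_one_contiguous (a := a) (b := b) (add_natCast_ne_neg_natCast hc n)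
      (by simp only [sub_re, add_re, natCast_re] at habc ⊢; linarith [n.cast_nonneg (α := ℝ)])
    simp only [ascPochhammer_succ_eval]
    push_cast
    rw [← add_assoc]
    linear_combination (c + n) * (c - a - b + n) * ih + (ascPochhammer ℂ n).eval (c - a) *
      (ascPochhammer ℂ n).eval (c - b) * hcn

theorem tendsto_norm_ascPochhammer_eval_add_nat {c : ℂ} (hc : 0 ≤ c.re) (j : ℕ) :
    Tendsto (fun n : ℕ => ‖(ascPochhammer ℂ (j + 1)).eval (c + n)‖) atTop atTop := by
  refine tendsto_atTop_mono (fun n => ?_) <|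
    (tendsto_atTop_add_const_left _ c.re tendsto_natCast_atTop_atTop).atTop_mul_const
      (by positivity : (0 : ℝ) < j !)
  rw [ascPochhammer_succ_eval_left, norm_mul]
  gcongr
  · calc c.re + n = (c + n).re := by simp
      _ ≤ ‖c + n‖ := re_le_norm _
  · calc (j ! : ℝ) = ‖(ascPochhammer ℂ j).eval ((1 : ℝ) : ℂ)‖ := by
          simp [ascPochhammer_eval_one]
      _ ≤ _ := norm_ascPochhammer_eval_ofReal_le zero_le_one
          (by simp only [add_re, natCast_re, one_re]; linarith [n.cast_nonneg (α := ℝ)]) j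

theorem tendsto_hyp2F1Coeff_add_nat (a b : ℂ) {c : ℂ} (hc : 0 ≤ c.re) (j : ℕ) :
    Tendsto (fun n : ℕ => hyp2F1Coeff a b (c + n) (j + 1)) atTop (𝓝 0) := by
  rw [tendsto_zero_iff_norm_tendsto_zero]
  simp only [hyp2F1Coeff, norm_div, norm_mul, norm_natCast]
  exact tendsto_const_nhds.div_atTop
    ((tendsto_norm_ascPochhammer_eval_add_nat hc j).atTop_mul_const (by positivity))

theorem tendsto_hyp2F1_one_add_nat {a b c : ℂ} (hc : 0 < c.re) (habc : 0 < (c - a - b).re) :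
    Tendsto (fun n : ℕ => hyp2F1 a b (c + n) 1) atTop (𝓝 1) := by
  have hlim : ∀ k, Tendsto (fun n : ℕ => hyp2F1Coeff a b (c + n) k) atTop
      (𝓝 (if k = 0 then 1 else 0)) := by
    rintro (_ | j)
    · simp [hyp2F1Coeff_zero]
    · simpa using tendsto_hyp2F1Coeff_add_nat a b hc.le j
  have hdom := summable_norm_hyp2F1Coeff (a := a) (b := b) (c := c.re) (by simpa using habc)
  simpa [hyp2F1_one] using tendsto_tsum_of_dominated_convergence hdom hlim <|
    .of_forall fun n k => norm_hyp2F1Coeff_le a b hc (by simp) k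

theorem tendsto_ascPochhammer_div {z₁ z₂ w₁ w₂ : ℂ} (hz₁ : ∀ k : ℕ, z₁ ≠ -k)
    (hz₂ : ∀ k : ℕ, z₂ ≠ -k) (hw₁ : ∀ k : ℕ, w₁ ≠ -k) (hw₂ : ∀ k : ℕ, w₂ ≠ -k)
    (h : z₁ + z₂ = w₁ + w₂) :
    Tendsto (fun n => (ascPochhammer ℂ n).eval w₁ * (ascPochhammer ℂ n).eval w₂ /
        ((ascPochhammer ℂ n).eval z₁ * (ascPochhammer ℂ n).eval z₂)) atTop
      (𝓝 (Gamma z₁ * Gamma z₂ / (Gamma w₁ * Gamma w₂))) := by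
  have hlim := ((GammaSeq_tendsto_Gamma z₁).mul (GammaSeq_tendsto_Gamma z₂)).div
    ((GammaSeq_tendsto_Gamma w₁).mul (GammaSeq_tendsto_Gamma w₂))
    (mul_ne_zero (Gamma_ne_zero hw₁) (Gamma_ne_zero hw₂))
  rw [← tendsto_add_atTop_iff_nat 1]
  refine hlim.congr' ?_
  filter_upwards [eventually_ne_atTop 0] with m hm
  have hm' : (m : ℂ) ≠ 0 := Nat.cast_ne_zero.2 hm
  have hpow : (m : ℂ) ^ z₁ * (m : ℂ) ^ z₂ = (m : ℂ) ^ w₁ * (m : ℂ) ^ w₂ := by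
    rw [← cpow_add _ _ hm', ← cpow_add _ _ hm', h]
  have := ascPochhammer_eval_ne_zero hz₁ (m + 1)
  have := ascPochhammer_eval_ne_zero hz₂ (m + 1)
  have := ascPochhammer_eval_ne_zero hw₁ (m + 1)
  have := ascPochhammer_eval_ne_zero hw₂ (m + 1)
  have : (m : ℂ) ^ w₁ ≠ 0 := by simp [cpow_eq_zero_iff, hm']
  have : (m : ℂ) ^ w₂ ≠ 0 := by simp [cpow_eq_zero_iff, hm']
  simp only [Pi.div_apply, GammaSeq_eq_div_ascPochhammer]
  have : (m ! : ℂ) ≠ 0 := Nat.cast_ne_zero.2 m.factorial_ne_zero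
  field_simp
  exact hpow

theorem hyp2F1_one_eq_Gamma {a b c : ℂ} (hc : 0 < c.re) (habc : 0 < (c - a - b).re) :
    hyp2F1 a b c 1 = Gamma c * Gamma (c - a - b) / (Gamma (c - a) * Gamma (c - b)) := by
  have hc' := ne_neg_natCast_of_re_pos hc
  have habc' := ne_neg_natCast_of_re_pos habc
  have hP (n : ℕ) := mul_ne_zero (ascPochhammer_eval_ne_zero hc' n)
    (ascPochhammer_eval_ne_zero habc' n)
  by_cases hpole : ∃ k : ℕ, c - a = -k ∨ c - b = -k
  · -- `F(c) = 0` by the `(k + 1)`-fold contiguous relation, and `Γ (c - a) Γ (c - b) = 0`.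
    obtain ⟨k, hk⟩ := hpole
    have hzero : (ascPochhammer ℂ (k + 1)).eval (c - a) *
        (ascPochhammer ℂ (k + 1)).eval (c - b) = 0 := by
      rcases hk with hk | hk <;> simp [hk]
    have hΓ : Gamma (c - a) * Gamma (c - b) = 0 := by
      rcases hk with hk | hk <;> simp [hk, Gamma_neg_nat_eq_zero]
    have := ascPochhammer_mul_hyp2F1_one hc' habc (k + 1)
    rw [hzero, zero_mul, mul_eq_zero] at this
    rw [hΓ, div_zero]
    exact this.resolve_left (hP _)
  · push Not at hpole
    refine tendsto_nhds_unique (tendsto_const_nhds.congr fun n => ?_) <| by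
      simpa using (tendsto_ascPochhammer_div hc' habc' (fun k => (hpole k).1)
        (fun k => (hpole k).2) (by ring)).mul (tendsto_hyp2F1_one_add_nat hc habc)
    rw [div_mul_eq_mul_div, eq_div_iff (hP n), mul_comm, ascPochhammer_mul_hyp2F1_one hc' habc]

theorem integral_norm_betaIntegrand (u v : ℂ) :
    ∫ t in Set.Ioc (0 : ℝ) 1, ‖(t : ℂ) ^ (u - 1) * (1 - (t : ℂ)) ^ (v - 1)‖ =
      ‖betaIntegral u.re v.re‖ := by
  set g : ℝ → ℝ := fun t => t ^ (u.re - 1) * (1 - t) ^ (v.re - 1)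
  have hnorm : ∀ t ∈ Set.Ioo (0 : ℝ) 1,
      ‖(t : ℂ) ^ (u - 1) * (1 - (t : ℂ)) ^ (v - 1)‖ = g t := by
    rintro t ⟨ht0, ht1⟩
    rw [norm_mul, norm_cpow_eq_rpow_re_of_pos ht0, ← ofReal_one, ← ofReal_sub,
      norm_cpow_eq_rpow_re_of_pos (sub_pos.2 ht1)]
    simp [g]
  have hofReal : ∀ t ∈ Set.Ioo (0 : ℝ) 1,
      (t : ℂ) ^ ((u.re : ℂ) - 1) * (1 - (t : ℂ)) ^ ((v.re : ℂ) - 1) = g t := by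
    rintro t ⟨ht0, ht1⟩
    rw [← ofReal_one, ← ofReal_sub, ← ofReal_sub, ← ofReal_sub, ← ofReal_cpow ht0.le,
      ← ofReal_cpow (sub_pos.2 ht1).le, ← ofReal_mul]
  have hg : 0 ≤ ∫ t in Set.Ioo (0 : ℝ) 1, g t :=
    setIntegral_nonneg measurableSet_Ioo fun t ⟨ht0, ht1⟩ => by positivity
  rw [betaIntegral, intervalIntegral.integral_of_le zero_le_one, integral_Ioc_eq_integral_Ioo,
    integral_Ioc_eq_integral_Ioo, setIntegral_congr_fun measurableSet_Ioo hnorm,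
    setIntegral_congr_fun measurableSet_Ioo hofReal, integral_complex_ofReal, norm_real,
    Real.norm_of_nonneg hg]

theorem hyp2F1Coeff_mul_betaIntegral (a b : ℂ) {c d : ℂ} (hc : 0 < c.re) (hd : 0 < d.re)
    (k : ℕ) :
    hyp2F1Coeff a b c k * betaIntegral (c + k) d =
      betaIntegral c d * hyp2F1Coeff a b (c + d) k := by
  have := ascPochhammer_eval_ne_zero (ne_neg_natCast_of_re_pos hc) k
  have := ascPochhammer_eval_ne_zero (ne_neg_natCast_of_re_pos (z := c + d)
    (by simp only [add_re]; positivity)) k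
  have : (k ! : ℂ) ≠ 0 := Nat.cast_ne_zero.2 k.factorial_ne_zero
  rw [betaIntegral_add_nat hc hd]
  simp only [hyp2F1Coeff]
  field_simp

theorem betaIntegrand_mul_hyp2F1_eq_tsum (a b c d : ℂ) {t : ℝ} (ht : 0 < t) :
    (t : ℂ) ^ (c - 1) * ((1 : ℂ) - t) ^ (d - 1) * hyp2F1 a b c t =
      ∑' k : ℕ, hyp2F1Coeff a b c k * ((t : ℂ) ^ (c + k - 1) * (1 - (t : ℂ)) ^ (d - 1)) := by
  rw [hyp2F1_eq_tsum, ← tsum_mul_left]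
  congr 1 with k
  rw [show c + k - 1 = c - 1 + k by ring, cpow_add _ _ (ofReal_ne_zero.2 ht.ne'), cpow_natCast]
  ring

section EulerTransform

variable {a b c d : ℂ}

theorem integrableOn_hyp2F1Coeff_mul_betaIntegrand (hc : 0 < c.re) (hd : 0 < d.re) (k : ℕ) :
    IntegrableOn (fun t : ℝ => hyp2F1Coeff a b c k *
      ((t : ℂ) ^ (c + k - 1) * (1 - (t : ℂ)) ^ (d - 1))) (Set.Ioc 0 1) := by
  have h :=
    betaIntegral_convergent (u := c + k) (by simp only [add_re, natCast_re]; positivity) hd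
  rw [intervalIntegrable_iff_integrableOn_Ioc_of_le zero_le_one] at h
  exact h.const_mul _

theorem summable_integral_norm_hyp2F1Coeff_mul_betaIntegrand (hc : 0 < c.re) (hd : 0 < d.re)
    (habcd : 0 < (c + d - a - b).re) :
    Summable fun k : ℕ => ∫ t in Set.Ioc (0 : ℝ) 1,
      ‖hyp2F1Coeff a b c k * ((t : ℂ) ^ (c + k - 1) * (1 - (t : ℂ)) ^ (d - 1))‖ := by
  have hc' : 0 < (c.re : ℂ).re := by simpa using hc
  have hd' : 0 < (d.re : ℂ).re := by simpa using hd
  refine Summable.of_nonneg_of_le (fun k => integral_nonneg fun _ => norm_nonneg _) (fun k => ?_)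
    ((summable_norm_hyp2F1Coeff (a := a) (b := b) (c := c.re + d.re)
      (by simpa using habcd)).mul_left ‖betaIntegral c.re d.re‖)
  calc ∫ t in Set.Ioc (0 : ℝ) 1,
        ‖hyp2F1Coeff a b c k * ((t : ℂ) ^ (c + k - 1) * (1 - (t : ℂ)) ^ (d - 1))‖
      = ‖hyp2F1Coeff a b c k‖ * ‖betaIntegral (c.re + k) d.re‖ := by
        simp_rw [norm_mul (hyp2F1Coeff a b c k)]
        rw [integral_const_mul, integral_norm_betaIntegrand]
        simp
    _ ≤ ‖hyp2F1Coeff a b c.re k‖ * ‖betaIntegral (c.re + k) d.re‖ := by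
        gcongr
        exact norm_hyp2F1Coeff_le a b hc le_rfl k
    _ = ‖betaIntegral c.re d.re‖ * ‖hyp2F1Coeff a b (c.re + d.re) k‖ := by
        rw [← norm_mul, ← norm_mul, hyp2F1Coeff_mul_betaIntegral a b hc' hd']

theorem integral_betaIntegrand_mul_hyp2F1 (hc : 0 < c.re) (hd : 0 < d.re)
    (habcd : 0 < (c + d - a - b).re) :
    ∫ t in (0 : ℝ)..1, (t : ℂ) ^ (c - 1) * ((1 : ℂ) - t) ^ (d - 1) * hyp2F1 a b c t =
      betaIntegral c d * hyp2F1 a b (c + d) 1 := by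
  rw [intervalIntegral.integral_of_le zero_le_one,
    setIntegral_congr_fun measurableSet_Ioc
      fun t ht => betaIntegrand_mul_hyp2F1_eq_tsum a b c d ht.1,
    ← integral_tsum_of_summable_integral_norm (integrableOn_hyp2F1Coeff_mul_betaIntegrand hc hd)
      (summable_integral_norm_hyp2F1Coeff_mul_betaIntegrand hc hd habcd),
    hyp2F1_one, ← tsum_mul_left]
  congr 1 with k
  rw [integral_const_mul, ← intervalIntegral.integral_of_le zero_le_one,
    ← hyp2F1Coeff_mul_betaIntegral a b hc hd, betaIntegral]

end EulerTransform

/-- For `Re c > 0`, `Re d > 0`, `Re (c+d-a-b) > 0`: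
`∫₀¹ t^(c-1) (1-t)^(d-1) ₂F₁(a,b;c;t) dt = Γ(c)Γ(d)Γ(c+d-a-b)/(Γ(c+d-a)Γ(c+d-b))`. -/
theorem integral_hyp2F1 (a b c d : ℂ) (hc : 0 < c.re) (hd : 0 < d.re)
    (habcd : 0 < (c + d - a - b).re) :
    ∫ t in (0:ℝ)..1, (t : ℂ) ^ (c - 1) * ((1 : ℂ) - t) ^ (d - 1) * hyp2F1 a b c t =
      Complex.Gamma c * Complex.Gamma d * Complex.Gamma (c + d - a - b) /
        (Complex.Gamma (c + d - a) * Complex.Gamma (c + d - b)) := by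
  have hcd : 0 < (c + d).re := by simp only [add_re]; positivity
  rw [integral_betaIntegrand_mul_hyp2F1 hc hd habcd, betaIntegral_eq_Gamma_mul_div _ _ hc hd,
    hyp2F1_one_eq_Gamma hcd habcd]
  have := Gamma_ne_zero_of_re_pos hcd
  field_simp
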